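/- arXiv:1910.08671 — 2 statements merged into one kernel-verified Lean document; each statement's English description precedes it below -/
import Mathlib

section
/- If R and S satisfy the characteristic system R_t - c R_r = (c'/(4c r^α))(R^2 - S^2) - (α c/r) S and S_t + c S_r = (c'/(4c r^α))(S^2 - R^2) + (α c/r) R (with c = c(u) evaluated along the solution), then the energy identity (R^2 + S^2)_t + (c (S^2 - R^2))_r = 0 holds. -/
/-!
Expanding the derivatives, the left-hand side of the energy identity equals
`2R(R_t - cR_r) + 2S(S_t + cS_r) + c_r(S² - R²)`. By the characteristic system the first two
terms add up to `c'/(2c r^α) · (R² - S²)(R - S)`, the `α c / r` terms cancelling, and since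
`R - S = 2 r^α c u_r` while `c_r = c' u_r`, this is exactly `-c_r(S² - R²)`. Where `c r^α = 0` the division is junk, but then `R = S` and
every term vanishes.
-/

section Slices

variable {E : Type*} [NormedAddCommGroup E] [NormedSpace ℝ E] {f : ℝ × ℝ → E} {a b : ℝ}

theorem DifferentiableAt.hasDerivAt_slice_fst (hf : DifferentiableAt ℝ f (a, b)) :
    HasDerivAt (fun s => f (s, b)) (fderiv ℝ f (a, b) (1, 0)) a :=
  hf.hasFDerivAt.comp_hasDerivAt a ((hasDerivAt_id a).prodMk (hasDerivAt_const a b))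

theorem DifferentiableAt.hasDerivAt_slice_snd (hf : DifferentiableAt ℝ f (a, b)) :
    HasDerivAt (fun s => f (a, s)) (fderiv ℝ f (a, b) (0, 1)) b :=
  hf.hasFDerivAt.comp_hasDerivAt b ((hasDerivAt_const b a).prodMk (hasDerivAt_id b))

theorem DifferentiableAt.slice_fst (hf : DifferentiableAt ℝ f (a, b)) :
    DifferentiableAt ℝ (fun s => f (s, b)) a :=
  hf.hasDerivAt_slice_fst.differentiableAt

theorem DifferentiableAt.slice_snd (hf : DifferentiableAt ℝ f (a, b)) :
    DifferentiableAt ℝ (fun s => f (a, s)) b :=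
  hf.hasDerivAt_slice_snd.differentiableAt

theorem ContDiff.differentiable_deriv_slice_fst {n : WithTop ℕ∞} (hf : ContDiff ℝ n f)
    (hn : 2 ≤ n) : Differentiable ℝ (fun p : ℝ × ℝ => deriv (fun s => f (s, p.2)) p.1) := by
  have hf1 : Differentiable ℝ f := hf.differentiable (two_pos.trans_le hn).ne'
  have hdf : ContDiff ℝ 1 (fderiv ℝ f) := hf.fderiv_right (by simpa [one_add_one_eq_two] using hn)
  simp only [fun p : ℝ × ℝ => (hf1 p).hasDerivAt_slice_fst.deriv]
  exact (hdf.differentiable one_ne_zero).clm_apply (differentiable_const _)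

theorem ContDiff.differentiable_deriv_slice_snd {n : WithTop ℕ∞} (hf : ContDiff ℝ n f)
    (hn : 2 ≤ n) : Differentiable ℝ (fun p : ℝ × ℝ => deriv (fun s => f (p.1, s)) p.2) := by
  have hf1 : Differentiable ℝ f := hf.differentiable (two_pos.trans_le hn).ne'
  have hdf : ContDiff ℝ 1 (fderiv ℝ f) := hf.fderiv_right (by simpa [one_add_one_eq_two] using hn)
  simp only [fun p : ℝ × ℝ => (hf1 p).hasDerivAt_slice_snd.deriv]
  exact (hdf.differentiable one_ne_zero).clm_apply (differentiable_const _)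

end Slices

theorem deriv_sq_add_sq {f g : ℝ → ℝ} {x : ℝ} (hf : DifferentiableAt ℝ f x)
    (hg : DifferentiableAt ℝ g x) :
    deriv (fun y => f y ^ 2 + g y ^ 2) x = 2 * f x * deriv f x + 2 * g x * deriv g x := by
  refine ((hf.hasDerivAt.pow 2).add (hg.hasDerivAt.pow 2)).deriv.trans ?_
  push_cast
  ring

theorem deriv_mul_sq_sub_sq {h f g : ℝ → ℝ} {x : ℝ} (hh : DifferentiableAt ℝ h x)
    (hf : DifferentiableAt ℝ f x) (hg : DifferentiableAt ℝ g x) :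
    deriv (fun y => h y * (g y ^ 2 - f y ^ 2)) x
      = deriv h x * (g x ^ 2 - f x ^ 2) + h x * (2 * g x * deriv g x - 2 * f x * deriv f x) := by
  refine (hh.hasDerivAt.mul ((hg.hasDerivAt.pow 2).sub (hf.hasDerivAt.pow 2))).deriv.trans ?_
  simp only [Pi.sub_apply, Pi.pow_apply]
  push_cast
  ring

theorem energy_balance_of_characteristic_system {R S Rt Rr St Sr c dc G a β : ℝ}
    (hRS : R - S = 2 * a * (c * G))
    (hR : Rt - c * Rr = dc / (4 * c * a) * (R ^ 2 - S ^ 2) - β * S)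
    (hS : St + c * Sr = dc / (4 * c * a) * (S ^ 2 - R ^ 2) + β * R) :
    2 * R * Rt + 2 * S * St + (dc * G * (S ^ 2 - R ^ 2) + c * (2 * S * Sr - 2 * R * Rr)) = 0 := by
  by_cases hca : c * a = 0
  · have hRS' : R = S := by linear_combination hRS + 2 * G * hca
    subst hRS'
    linear_combination 2 * R * hR + 2 * R * hS
  · obtain ⟨hc, ha⟩ := mul_ne_zero_iff.mp hca
    have hk : dc / (4 * c * a) * (R - S) = dc * G / 2 := by
      rw [hRS]; field_simp; ring
    linear_combination 2 * R * hR + 2 * S * hS + 2 * (R ^ 2 - S ^ 2) * hk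

theorem energy_identity_from_characteristic_system_general
    (α : ℝ)
    (c : ℝ → ℝ) (hc : ContDiff ℝ 2 c)
    (u : ℝ → ℝ → ℝ) (hu : ContDiff ℝ 2 (fun p : ℝ × ℝ => u p.1 p.2))
    (R S : ℝ → ℝ → ℝ)
    (hR : ∀ t r : ℝ, R t r
      = r ^ α * (deriv (fun s => u s r) t + c (u t r) * deriv (fun ρ => u t ρ) r))
    (hS : ∀ t r : ℝ, S t r
      = r ^ α * (deriv (fun s => u s r) t - c (u t r) * deriv (fun ρ => u t ρ) r))
    (hsys : ∀ t r : ℝ, 0 < r →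
      (deriv (fun s => R s r) t - c (u t r) * deriv (fun ρ => R t ρ) r
        = deriv c (u t r) / (4 * c (u t r) * r ^ α) * ((R t r) ^ 2 - (S t r) ^ 2)
          - α * c (u t r) / r * S t r)
      ∧ (deriv (fun s => S s r) t + c (u t r) * deriv (fun ρ => S t ρ) r
        = deriv c (u t r) / (4 * c (u t r) * r ^ α) * ((S t r) ^ 2 - (R t r) ^ 2)
          + α * c (u t r) / r * R t r)) :
    ∀ t r : ℝ, 0 < r →
      deriv (fun s => (R s r) ^ 2 + (S s r) ^ 2) t
        + deriv (fun ρ => c (u t ρ) * ((S t ρ) ^ 2 - (R t ρ) ^ 2)) r = 0 := by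
  intro t r hr
  have hut := hu.differentiable_deriv_slice_fst le_rfl
  have hur := hu.differentiable_deriv_slice_snd le_rfl
  have hcu : Differentiable ℝ (fun p : ℝ × ℝ => c (u p.1 p.2)) :=
    (hc.differentiable two_ne_zero).comp (hu.differentiable two_ne_zero)
  have hpow : DifferentiableAt ℝ (fun p : ℝ × ℝ => p.2 ^ α) (t, r) :=
    differentiableAt_snd.rpow_const (Or.inl hr.ne')
  have hRd : DifferentiableAt ℝ (fun p : ℝ × ℝ => R p.1 p.2) (t, r) := by
    simp only [hR]
    exact hpow.mul ((hut _).add ((hcu _).mul (hur _)))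
  have hSd : DifferentiableAt ℝ (fun p : ℝ × ℝ => S p.1 p.2) (t, r) := by
    simp only [hS]
    exact hpow.mul ((hut _).sub ((hcu _).mul (hur _)))
  have hcr : HasDerivAt (fun ρ => c (u t ρ)) (deriv c (u t r) * deriv (fun ρ => u t ρ) r) r :=
    ((hc.differentiable two_ne_zero) _).hasDerivAt.comp r
      ((hu.differentiable two_ne_zero) (t, r)).slice_snd.hasDerivAt
  rw [deriv_sq_add_sq hRd.slice_fst hSd.slice_fst,
    deriv_mul_sq_sub_sq hcr.differentiableAt hRd.slice_snd hSd.slice_snd, hcr.deriv]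
  exact energy_balance_of_characteristic_system (by rw [hR, hS]; ring) (hsys t r hr).1
    (hsys t r hr).2

/-- for the Riemann variables of a solution `u` of the spherically
symmetric variational wave equation, the characteristic system (2.3) implies the
energy identity `(R² + S²)_t + (c(u)(S² - R²))_r = 0`. -/
theorem energy_identity_from_characteristic_system
    (d : ℕ) (hd : 1 < d) (α : ℝ) (hα : α = ((d : ℝ) - 1) / 2)
    (c : ℝ → ℝ) (hc : ContDiff ℝ 2 c)
    (c₀ c₁ : ℝ) (hc₀ : 0 < c₀) (hcl : ∀ v, c₀ ≤ c v) (hcu : ∀ v, c v ≤ c₁)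
    (u : ℝ → ℝ → ℝ) (hu : ContDiff ℝ 2 (fun p : ℝ × ℝ => u p.1 p.2))
    (hpde : ∀ t r : ℝ, 0 < r →
      deriv (fun s => deriv (fun s' => u s' r) s) t
        - c (u t r) * deriv (fun ρ => c (u t ρ) * deriv (fun ρ' => u t ρ') ρ) r
        - ((d : ℝ) - 1) * (c (u t r)) ^ 2 * deriv (fun ρ => u t ρ) r / r = 0)
    (R S : ℝ → ℝ → ℝ)
    (hR : ∀ t r : ℝ, R t r
      = r ^ α * (deriv (fun s => u s r) t + c (u t r) * deriv (fun ρ => u t ρ) r))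
    (hS : ∀ t r : ℝ, S t r
      = r ^ α * (deriv (fun s => u s r) t - c (u t r) * deriv (fun ρ => u t ρ) r))
    (hsys : ∀ t r : ℝ, 0 < r →
      (deriv (fun s => R s r) t - c (u t r) * deriv (fun ρ => R t ρ) r
        = deriv c (u t r) / (4 * c (u t r) * r ^ α) * ((R t r) ^ 2 - (S t r) ^ 2)
          - α * c (u t r) / r * S t r)
      ∧ (deriv (fun s => S s r) t + c (u t r) * deriv (fun ρ => S t ρ) r
        = deriv c (u t r) / (4 * c (u t r) * r ^ α) * ((S t r) ^ 2 - (R t r) ^ 2)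
          + α * c (u t r) / r * R t r)) :
    ∀ t r : ℝ, 0 < r →
      deriv (fun s => (R s r) ^ 2 + (S s r) ^ 2) t
        + deriv (fun ρ => c (u t ρ) * ((S t ρ) ^ 2 - (R t ρ) ^ 2)) r = 0 :=
  energy_identity_from_characteristic_system_general α c hc u hu R S hR hS hsys
end

section
/- Along the forward characteristic r̂(t) with r̂(0)=r₀ and dr̂/dt = c(u(t,r̂(t))) ≥ c₀ > 0, if ∫_{r₀}^{r} R²(t̂(ρ),ρ) dρ ≤ K r₀^{2α} ε for all r on the characteristic up to time t < (r₀-ε)/c₁, then |u(t,r̂(t)) - u(0,r₀)| ≤ √(K(r₀-ε)/(c₀c₁)) · √ε. -/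
/-!
Since r̂ moves right, r̂ ≥ r₀ and so |u'|² = R²/r̂^{2α} ≤ R²/r₀^{2α} along the characteristic.
The substitution ρ = r̂(t), dρ = c dt ≥ c₀ dt turns the energy bound into
∫₀ᵗ R² ≤ K r₀^{2α} ε / c₀, and Cauchy–Schwarz on [0, t] with t < (r₀ - ε)/c₁ gives the estimate.
-/

open MeasureTheory Set

theorem integral_abs_le_sqrt_measureReal_mul_sqrt_integral_sq {α : Type*} [MeasurableSpace α]
    {μ : Measure α} [IsFiniteMeasure μ] {g : α → ℝ} (hg : MemLp g 2 μ) :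
    ∫ a, |g a| ∂μ ≤ √(μ.real univ) * √(∫ a, g a ^ 2 ∂μ) := by
  have h2 : ENNReal.ofReal 2 = 2 := by norm_num
  have := integral_mul_le_Lp_mul_Lq_of_nonneg Real.HolderConjugate.two_two (μ := μ)
    (Filter.Eventually.of_forall fun a => abs_nonneg (g a))
    (Filter.Eventually.of_forall fun _ => zero_le_one) (h2 ▸ hg.abs) (h2 ▸ memLp_const 1)
  simp only [one_pow, mul_one, Real.rpow_two, sq_abs, integral_const, smul_eq_mul,
    ← Real.sqrt_eq_rpow] at this
  rwa [mul_comm] at this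

theorem abs_sub_le_sqrt_mul_sqrt_integral_deriv_sq {f f' : ℝ → ℝ} {a b : ℝ} (hab : a ≤ b)
    (hf : ∀ x ∈ Icc a b, HasDerivAt f (f' x) x) (hf' : ContinuousOn f' (Icc a b)) :
    |f b - f a| ≤ √(b - a) * √(∫ x in Icc a b, f' x ^ 2) := by
  have : Fact (volume (Icc a b) < ⊤) := ⟨measure_Icc_lt_top⟩
  have hL2 : MemLp f' 2 (volume.restrict (Icc a b)) :=
    (memLp_two_iff_integrable_sq (hf'.aestronglyMeasurable measurableSet_Icc)).2
      ((hf'.pow 2).integrableOn_compact isCompact_Icc)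
  rw [← intervalIntegral.integral_eq_sub_of_hasDerivAt (by rwa [uIcc_of_le hab])
    (hf'.intervalIntegrable_of_Icc hab), intervalIntegral.integral_of_le hab,
    ← integral_Icc_eq_integral_Ioc]
  calc |∫ x in Icc a b, f' x| ≤ ∫ x in Icc a b, |f' x| := abs_integral_le_integral_abs
    _ ≤ _ := by
      simpa [measureReal_restrict_apply, hab] using
        integral_abs_le_sqrt_measureReal_mul_sqrt_integral_sq hL2

theorem mul_setIntegral_le_setIntegral_mul {w g : ℝ → ℝ} {a b m : ℝ}
    (hw : IntegrableOn w (Icc a b)) (hm : ∀ x ∈ Icc a b, m ≤ w x) (hm0 : 0 ≤ m)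
    (hg : ContinuousOn g (Icc a b)) (hg0 : ∀ x ∈ Icc a b, 0 ≤ g x) :
    m * ∫ x in Icc a b, g x ≤ ∫ x in Icc a b, w x * g x := by
  rw [← integral_const_mul]
  exact setIntegral_mono_of_nonneg (fun x hx => mul_nonneg hm0 (hg0 x hx))
    (fun x hx => mul_le_mul_of_nonneg_right (hm x hx) (hg0 x hx))
    (hw.mul_continuousOn hg isCompact_Icc)

theorem mul_setIntegral_le_setIntegral_image {φ φ' g G : ℝ → ℝ} {a b m : ℝ} (hab : a ≤ b)
    (hφ : ∀ x ∈ Icc a b, HasDerivAt φ (φ' x) x) (hm0 : 0 ≤ m) (hm : ∀ x ∈ Icc a b, m ≤ φ' x)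
    (hg : ContinuousOn g (Icc a b)) (hg0 : ∀ x ∈ Icc a b, 0 ≤ g x)
    (hGφ : EqOn (G ∘ φ) g (Icc a b)) :
    m * ∫ x in Icc a b, g x ≤ ∫ ρ in Icc (φ a) (φ b), G ρ := by
  have hφc : ContinuousOn φ (Icc a b) := HasDerivAt.continuousOn hφ
  have hφIoo : ∀ x ∈ Ioo a b, HasDerivAt φ (φ' x) x := fun x hx => hφ x (Ioo_subset_Icc_self hx)
  have hφ'0 : ∀ x ∈ Ioo a b, 0 ≤ φ' x := fun x hx => hm0.trans (hm x (Ioo_subset_Icc_self hx))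
  have hφ'int : IntegrableOn φ' (Icc a b) :=
    (integrableOn_Icc_iff_integrableOn_Ioc).2
      (intervalIntegral.integrableOn_deriv_of_nonneg hφc hφIoo hφ'0)
  calc m * ∫ x in Icc a b, g x ≤ ∫ x in Icc a b, φ' x * g x :=
        mul_setIntegral_le_setIntegral_mul hφ'int hm hm0 hg hg0
    _ = ∫ x in Icc a b, φ' x • G (φ x) :=
        setIntegral_congr_fun measurableSet_Icc fun x hx => by rw [smul_eq_mul, ← hGφ hx]; rfl
    _ = ∫ ρ in Icc (φ a) (φ b), G ρ := integral_Icc_deriv_smul_of_deriv_nonneg hφc hφIoo hφ'0 hab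

theorem le_of_hasDerivAt_nonneg_of_mem_Icc {φ φ' : ℝ → ℝ} {a b : ℝ}
    (hφ : ∀ x ∈ Icc a b, HasDerivAt φ (φ' x) x) (hφ' : ∀ x ∈ Icc a b, 0 ≤ φ' x) :
    ∀ x ∈ Icc a b, φ a ≤ φ x := fun _ hx =>
  monotoneOn_of_hasDerivWithinAt_nonneg (convex_Icc a b)
    (HasDerivAt.continuousOn hφ)
    (fun y hy => (hφ y (interior_subset hy)).hasDerivWithinAt)
    (fun y hy => hφ' y (interior_subset hy)) (left_mem_Icc.2 (hx.1.trans hx.2)) hx hx.1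

theorem div_rpow_sq_le {y r r₀ α : ℝ} (hr₀ : 0 < r₀) (hr : r₀ ≤ r) (hα : 0 ≤ α) :
    (y / r ^ α) ^ 2 ≤ y ^ 2 / r₀ ^ (2 * α) := by
  rw [div_pow, mul_comm, Real.rpow_mul hr₀.le, Real.rpow_two]
  gcongr

theorem setIntegral_div_rpow_sq_le {u r : ℝ → ℝ} {a b r₀ α : ℝ} (hu : ContinuousOn u (Icc a b))
    (hr₀ : 0 < r₀) (hr : ∀ x ∈ Icc a b, r₀ ≤ r x) (hα : 0 ≤ α) :
    ∫ x in Icc a b, (u x / r x ^ α) ^ 2 ≤ (∫ x in Icc a b, u x ^ 2) / r₀ ^ (2 * α) := by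
  rw [← integral_div]
  exact setIntegral_mono_of_nonneg (fun _ _ => sq_nonneg _)
    (fun x hx => div_rpow_sq_le hr₀ (hr x hx) hα)
    (((hu.pow 2).integrableOn_compact isCompact_Icc).div_const _)

theorem variation_along_characteristic_general
    (c₀ c₁ K ε r₀ α : ℝ)
    (hc₀ : 0 < c₀) (hc₀₁ : c₀ ≤ c₁) (hε : 0 < ε)
    (hα : 0 < α)
    (cc : ℝ → ℝ) (hccl : ∀ t : ℝ, c₀ ≤ cc t)
    (rhat : ℝ → ℝ) (hrhat0 : rhat 0 = r₀)
    (hrhat : ∀ t ∈ Set.Ico (0 : ℝ) ((r₀ - ε) / c₁), HasDerivAt rhat (cc t) t)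
    (that : ℝ → ℝ)
    (hinv : ∀ t ∈ Set.Ico (0 : ℝ) ((r₀ - ε) / c₁), that (rhat t) = t)
    (R : ℝ → ℝ → ℝ) (hRcont : Continuous (fun p : ℝ × ℝ => R p.1 p.2))
    (f : ℝ → ℝ)
    (hf : ∀ t ∈ Set.Ico (0 : ℝ) ((r₀ - ε) / c₁),
      HasDerivAt f (R t (rhat t) / (rhat t) ^ α) t)
    (henergy : ∀ t ∈ Set.Ico (0 : ℝ) ((r₀ - ε) / c₁),
      (∫ ρ in Set.Icc r₀ (rhat t), (R (that ρ) ρ) ^ 2) ≤ K * r₀ ^ (2 * α) * ε) :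
    ∀ t ∈ Set.Ico (0 : ℝ) ((r₀ - ε) / c₁),
      |f t - f 0| ≤ Real.sqrt (K * (r₀ - ε) / (c₀ * c₁)) * Real.sqrt ε := by
  intro t ht
  have hIcc : Icc 0 t ⊆ Ico 0 ((r₀ - ε) / c₁) := fun x hx => ⟨hx.1, hx.2.trans_lt ht.2⟩
  have hT : 0 < (r₀ - ε) / c₁ := ht.1.trans_lt ht.2
  have hr₀ : 0 < r₀ := by
    rw [div_pos_iff_of_pos_right (hc₀.trans_le hc₀₁), sub_pos] at hT
    exact hε.trans hT
  have hrhat' : ∀ x ∈ Icc 0 t, HasDerivAt rhat (cc x) x := fun x hx => hrhat x (hIcc hx)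
  have hr₀_le : ∀ x ∈ Icc 0 t, r₀ ≤ rhat x := hrhat0 ▸
    le_of_hasDerivAt_nonneg_of_mem_Icc hrhat' fun x _ => hc₀.le.trans (hccl x)
  have hrhatc : ContinuousOn rhat (Icc 0 t) := HasDerivAt.continuousOn hrhat'
  have hRc : ContinuousOn (fun x => R x (rhat x)) (Icc 0 t) :=
    hRcont.comp_continuousOn (continuousOn_id.prodMk hrhatc)
  have hE : c₀ * ∫ x in Icc 0 t, R x (rhat x) ^ 2 ≤ K * r₀ ^ (2 * α) * ε :=
    calc c₀ * ∫ x in Icc 0 t, R x (rhat x) ^ 2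
        ≤ ∫ ρ in Icc (rhat 0) (rhat t), R (that ρ) ρ ^ 2 :=
          mul_setIntegral_le_setIntegral_image ht.1 hrhat' hc₀.le (fun x _ => hccl x) (hRc.pow 2)
            (fun _ _ => sq_nonneg _) fun x hx => by simp only [Function.comp, hinv x (hIcc hx)]
      _ ≤ K * r₀ ^ (2 * α) * ε := hrhat0 ▸ henergy t ht
  have hL2 : ∫ x in Icc 0 t, (R x (rhat x) / rhat x ^ α) ^ 2 ≤ K * ε / c₀ :=
    (setIntegral_div_rpow_sq_le hRc hr₀ hr₀_le hα.le).trans <| by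
      rw [div_le_div_iff₀ (by positivity) hc₀]
      linarith
  have hu' : ContinuousOn (fun x => R x (rhat x) / rhat x ^ α) (Icc 0 t) :=
    hRc.div (hrhatc.rpow_const fun x hx => Or.inl (hr₀.trans_le (hr₀_le x hx)).ne')
      fun x hx => (Real.rpow_pos_of_pos (hr₀.trans_le (hr₀_le x hx)) α).ne'
  calc |f t - f 0| ≤ √(t - 0) * √(∫ x in Icc 0 t, (R x (rhat x) / rhat x ^ α) ^ 2) :=
        abs_sub_le_sqrt_mul_sqrt_integral_deriv_sq ht.1 (fun x hx => hf x (hIcc hx)) hu'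
    _ ≤ √((r₀ - ε) / c₁) * √(K * ε / c₀) := by gcongr; linarith [ht.2]
    _ = √(K * (r₀ - ε) / (c₀ * c₁)) * √ε := by
        rw [← Real.sqrt_mul hT.le, ← Real.sqrt_mul' _ hε.le]
        congr 1
        ring

/-- estimate (2.15) for the variation of `u` along the forward
characteristic `r̂(t)` from `(0, r₀)`: if the energy along the characteristic is
bounded by `K r₀^{2α} ε`, then `|u(t,r̂(t)) - u(0,r₀)| ≤ √(K(r₀-ε)/(c₀c₁)) √ε`. -/
theorem variation_along_characteristic
    (c₀ c₁ K ε r₀ α : ℝ)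
    (hc₀ : 0 < c₀) (hc₀₁ : c₀ ≤ c₁) (hK : 0 < K) (hε : 0 < ε) (hεr₀ : ε < r₀)
    (hα : 0 < α)
    (cc : ℝ → ℝ) (hccl : ∀ t : ℝ, c₀ ≤ cc t) (hccu : ∀ t : ℝ, cc t ≤ c₁)
    (rhat : ℝ → ℝ) (hrhat0 : rhat 0 = r₀)
    (hrhat : ∀ t ∈ Set.Ico (0 : ℝ) ((r₀ - ε) / c₁), HasDerivAt rhat (cc t) t)
    (that : ℝ → ℝ)
    (hinv : ∀ t ∈ Set.Ico (0 : ℝ) ((r₀ - ε) / c₁), that (rhat t) = t)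
    (R : ℝ → ℝ → ℝ) (hRcont : Continuous (fun p : ℝ × ℝ => R p.1 p.2))
    (f : ℝ → ℝ)
    (hf : ∀ t ∈ Set.Ico (0 : ℝ) ((r₀ - ε) / c₁),
      HasDerivAt f (R t (rhat t) / (rhat t) ^ α) t)
    (henergy : ∀ t ∈ Set.Ico (0 : ℝ) ((r₀ - ε) / c₁),
      (∫ ρ in Set.Icc r₀ (rhat t), (R (that ρ) ρ) ^ 2) ≤ K * r₀ ^ (2 * α) * ε) :
    ∀ t ∈ Set.Ico (0 : ℝ) ((r₀ - ε) / c₁),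
      |f t - f 0| ≤ Real.sqrt (K * (r₀ - ε) / (c₀ * c₁)) * Real.sqrt ε :=
  variation_along_characteristic_general c₀ c₁ K ε r₀ α hc₀ hc₀₁ hε hα cc hccl rhat hrhat0 hrhat
    that hinv R hRcont f hf henergy
end
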